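/- Let 0 < p < 1 and let W = {w_{jk}}_{j,k≥0} be a matrix of rank one, i.e. w_{jk} = u_j v_k for sequences u = {u_j}_{j≥0} and v = {v_k}_{k≥0} of complex numbers. Then W ∈ 𝒲_p if and only if ∑_{j,k} |w_{jk}|^{2p/(1−p)} < ∞, and in that case ‖W‖_{𝒲_p} = (∑_{j,k} |w_{jk}|^{2p/(1−p)})^{(1−p)/(2p)} = ‖u‖_{ℓ^{2p♯}} ‖v‖_{ℓ^{2p♯}}. -/

import Mathlib

open scoped BigOperators

/-- The `Ξ_p = ℓ^{2p♯}(ℓ^{2p})` norm of a matrix,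
`‖X‖_{Ξ_p} = (∑_j (∑_k |x_{jk}|^{2p})^{1/(1-p)})^{(1-p)/(2p)}`. -/
noncomputable def xiNorm (p : ℝ) (X : ℕ → ℕ → ℂ) : ℝ :=
  (∑' j, (∑' k, ‖X j k‖ ^ (2 * p)) ^ (1 / (1 - p))) ^ ((1 - p) / (2 * p))

/-- `X` has finite `Ξ_p`-norm: all the sums defining `xiNorm` converge. -/
def HasXiNorm (p : ℝ) (X : ℕ → ℕ → ℂ) : Prop :=
  (∀ j, Summable fun k => ‖X j k‖ ^ (2 * p)) ∧
    Summable fun j => (∑' k, ‖X j k‖ ^ (2 * p)) ^ (1 / (1 - p))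

/-- The set of values `‖X‖_{Ξ_p} ‖Y‖_{Ξ_p}` over all factorizations `W = X Yᵗ`,
i.e. `w_{jk} = ∑_l x_{jl} y_{kl}`, with `X, Y` of finite `Ξ_p`-norm.
`W ∈ 𝒲_p` iff this set is nonempty, and `‖W‖_{𝒲_p}` is its infimum. -/
noncomputable def wReprVals (p : ℝ) (W : ℕ → ℕ → ℂ) : Set ℝ :=
  {c | ∃ X Y : ℕ → ℕ → ℂ, HasXiNorm p X ∧ HasXiNorm p Y ∧
    (∀ j k, HasSum (fun l => X j l * Y k l) (W j k)) ∧
    c = xiNorm p X * xiNorm p Y}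

/-!
A factorization `W = X Yᵗ` bounds each entry by Cauchy–Schwarz and `ℓ^{2p} ⊂ ℓ²`:
`|w_{jk}| ≤ ‖x_j‖_{2p} ‖y_k‖_{2p}` for the rows `x_j`, `y_k` of `X`, `Y`. Raising this to the
power `2p♯ = 2p/(1-p)` and summing over `j, k` gives `‖W‖_{ℓ^{2p♯}} ≤ ‖X‖_{Ξ_p} ‖Y‖_{Ξ_p}` for
every matrix `W`. For `W = u vᵗ` the one-column factorization `X = u e₀ᵗ`, `Y = v e₀ᵗ` attains
this bound, because `‖u e₀ᵗ‖_{Ξ_p} = ‖u‖_{ℓ^{2p♯}}`.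
-/

section Summation

variable {ι : Type*}

lemma summable_rpow_and_tsum_rpow_le_rpow_tsum {f : ι → ℝ} (hf0 : ∀ i, 0 ≤ f i)
    (hf : Summable f) {s : ℝ} (hs : 1 ≤ s) :
    Summable (fun i => f i ^ s) ∧ ∑' i, f i ^ s ≤ (∑' i, f i) ^ s := by
  have hpow : ∀ {a : ℝ}, 0 ≤ a → a ^ s = a ^ (s - 1) * a := fun ha => by
    simpa using Real.rpow_add' ha (show s - 1 + 1 ≠ 0 by linarith)
  set C := ∑' i, f i
  have hbound : ∀ i, f i ^ s ≤ C ^ (s - 1) * f i := fun i => by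
    rw [hpow (hf0 i)]
    exact mul_le_mul_of_nonneg_right
      (Real.rpow_le_rpow (hf0 i) (hf.le_tsum i fun j _ => hf0 j) (by linarith)) (hf0 i)
  have hsum : Summable fun i => f i ^ s :=
    (hf.mul_left _).of_nonneg_of_le (fun i => Real.rpow_nonneg (hf0 i) s) hbound
  refine ⟨hsum, ?_⟩
  calc ∑' i, f i ^ s ≤ ∑' i, C ^ (s - 1) * f i := hsum.tsum_le_tsum hbound (hf.mul_left _)
    _ = C ^ s := by rw [tsum_mul_left, hpow (tsum_nonneg hf0)]

lemma summable_rpow_and_rpow_tsum_rpow_le {f : ι → ℝ} (hf0 : ∀ i, 0 ≤ f i) {r s : ℝ}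
    (hr : 0 < r) (hrs : r ≤ s) (hf : Summable fun i => f i ^ r) :
    Summable (fun i => f i ^ s) ∧ (∑' i, f i ^ s) ^ (1 / s) ≤ (∑' i, f i ^ r) ^ (1 / r) := by
  have hpow : ∀ i, (f i ^ r) ^ (s / r) = f i ^ s := fun i => by
    rw [← Real.rpow_mul (hf0 i), mul_div_cancel₀ _ hr.ne']
  obtain ⟨hsum, hle⟩ := summable_rpow_and_tsum_rpow_le_rpow_tsum
    (fun i => Real.rpow_nonneg (hf0 i) r) hf ((one_le_div hr).2 hrs)
  simp only [hpow] at hsum hle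
  refine ⟨hsum, ?_⟩
  have hr0 : 0 ≤ ∑' i, f i ^ r := tsum_nonneg fun i => Real.rpow_nonneg (hf0 i) r
  calc (∑' i, f i ^ s) ^ (1 / s) ≤ ((∑' i, f i ^ r) ^ (s / r)) ^ (1 / s) :=
        Real.rpow_le_rpow (tsum_nonneg fun i => Real.rpow_nonneg (hf0 i) s) hle
          (by have := hr.trans_le hrs; positivity)
    _ = (∑' i, f i ^ r) ^ (1 / r) := by
        rw [← Real.rpow_mul hr0]
        congr 1
        field_simp [(hr.trans_le hrs).ne']

lemma HasSum.norm_le_rpow_tsum_mul_rpow_tsum {R : Type*} [NormedRing R] {x y : ι → R} {w : R}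
    (hw : HasSum (fun l => x l * y l) w) {r : ℝ} (hr : 0 < r) (hr2 : r ≤ 2)
    (hx : Summable fun l => ‖x l‖ ^ r) (hy : Summable fun l => ‖y l‖ ^ r) :
    ‖w‖ ≤ (∑' l, ‖x l‖ ^ r) ^ (1 / r) * (∑' l, ‖y l‖ ^ r) ^ (1 / r) := by
  obtain ⟨hx2, hx2_le⟩ := summable_rpow_and_rpow_tsum_rpow_le (fun l => norm_nonneg (x l)) hr hr2 hx
  obtain ⟨hy2, hy2_le⟩ := summable_rpow_and_rpow_tsum_rpow_le (fun l => norm_nonneg (y l)) hr hr2 hy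
  obtain ⟨hxy, hcs⟩ := Real.summable_and_inner_le_Lp_mul_Lq_tsum_of_nonneg .two_two
    (fun l => norm_nonneg (x l)) (fun l => norm_nonneg (y l)) hx2 hy2
  calc ‖w‖ ≤ ∑' l, ‖x l‖ * ‖y l‖ := hw.norm_le_of_bounded hxy.hasSum fun l => norm_mul_le _ _
    _ ≤ _ := hcs
    _ ≤ _ := mul_le_mul hx2_le hy2_le (by positivity) (by positivity)

lemma tsum_prod_mul_eq_mul_tsum {α β : Type*} {f : α → ℝ} {g : β → ℝ}
    (h : Summable fun ab : α × β => f ab.1 * g ab.2) :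
    ∑' ab : α × β, f ab.1 * g ab.2 = (∑' a, f a) * ∑' b, g b := by
  rw [h.tsum_prod' h.prod_factor]
  simp_rw [tsum_mul_left, tsum_mul_right]

lemma hasSum_norm_rpow_single [DecidableEq ι] {E : Type*} [SeminormedAddCommGroup E] {r : ℝ}
    (hr : r ≠ 0) (i : ι) (a : E) :
    HasSum (fun l => ‖(Pi.single i a : ι → E) l‖ ^ r) (‖a‖ ^ r) := by
  convert hasSum_pi_single i (‖a‖ ^ r) using 1
  funext l
  by_cases h : l = i <;> simp [h, Real.zero_rpow hr]

end Summation

section RankOne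

variable {u v : ℕ → ℂ}

lemma rpow_tsum_norm_mul_rpow {q e : ℝ}
    (h : Summable fun jk : ℕ × ℕ => ‖u jk.1 * v jk.2‖ ^ q) :
    (∑' jk : ℕ × ℕ, ‖u jk.1 * v jk.2‖ ^ q) ^ e =
      (∑' j, ‖u j‖ ^ q) ^ e * (∑' k, ‖v k‖ ^ q) ^ e := by
  simp only [norm_mul, Real.mul_rpow (norm_nonneg _) (norm_nonneg _)] at h ⊢
  rw [tsum_prod_mul_eq_mul_tsum (f := fun j => ‖u j‖ ^ q) (g := fun k => ‖v k‖ ^ q) h,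
    Real.mul_rpow (tsum_nonneg fun _ => by positivity) (tsum_nonneg fun _ => by positivity)]

/-- When `u = 0`, say, `v` need not be `q`-summable, so both factors are replaced by `0`. -/
lemma exists_summable_rankOne_eq {q : ℝ} (hq : q ≠ 0)
    (h : Summable fun jk : ℕ × ℕ => ‖u jk.1 * v jk.2‖ ^ q) :
    ∃ u' v' : ℕ → ℂ, (Summable fun j => ‖u' j‖ ^ q) ∧ (Summable fun k => ‖v' k‖ ^ q) ∧
      ∀ j k, u' j * v' k = u j * v k := by
  have hzero : Summable fun _ : ℕ => ‖(0 : ℂ)‖ ^ q := by simp [Real.zero_rpow hq]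
  by_cases hu : ∀ j, u j = 0
  · exact ⟨0, 0, hzero, hzero, fun j k => by simp [hu j]⟩
  by_cases hv : ∀ k, v k = 0
  · exact ⟨0, 0, hzero, hzero, fun j k => by simp [hv k]⟩
  push Not at hu hv
  obtain ⟨j₀, hj₀⟩ := hu
  obtain ⟨k₀, hk₀⟩ := hv
  have hne : ∀ {z : ℂ}, z ≠ 0 → ‖z‖ ^ q ≠ 0 := fun hz =>
    (Real.rpow_pos_of_pos (norm_pos_iff.2 hz) q).ne'
  simp only [norm_mul, Real.mul_rpow (norm_nonneg _) (norm_nonneg _)] at h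
  exact ⟨u, v, (summable_mul_right_iff (hne hk₀)).1 (h.prod_symm.prod_factor k₀),
    (summable_mul_left_iff (hne hj₀)).1 (h.prod_factor j₀), fun _ _ => rfl⟩

end RankOne

section WNorm

variable {p : ℝ}

lemma summable_and_rpow_tsum_le_of_mem_wReprVals (hp0 : 0 < p) (hp1 : p < 1)
    {W : ℕ → ℕ → ℂ} {c : ℝ} (hc : c ∈ wReprVals p W) :
    (Summable fun jk : ℕ × ℕ => ‖W jk.1 jk.2‖ ^ (2 * p / (1 - p))) ∧
      (∑' jk : ℕ × ℕ, ‖W jk.1 jk.2‖ ^ (2 * p / (1 - p))) ^ ((1 - p) / (2 * p)) ≤ c := by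
  obtain ⟨X, Y, hX, hY, hW, rfl⟩ := hc
  have hp : 0 < 1 - p := by linarith
  set S : ℕ → ℝ := fun j => ∑' l, ‖X j l‖ ^ (2 * p)
  set T : ℕ → ℝ := fun k => ∑' l, ‖Y k l‖ ^ (2 * p)
  have hS : ∀ j, 0 ≤ S j := fun j => tsum_nonneg fun l => by positivity
  have hT : ∀ k, 0 ≤ T k := fun k => tsum_nonneg fun l => by positivity
  have hentry : ∀ j k,
      ‖W j k‖ ^ (2 * p / (1 - p)) ≤ S j ^ (1 / (1 - p)) * T k ^ (1 / (1 - p)) := fun j k => by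
    have hexp : 1 / (2 * p) * (2 * p / (1 - p)) = 1 / (1 - p) := by field_simp
    calc ‖W j k‖ ^ (2 * p / (1 - p))
        ≤ (S j ^ (1 / (2 * p)) * T k ^ (1 / (2 * p))) ^ (2 * p / (1 - p)) :=
          Real.rpow_le_rpow (norm_nonneg _) ((hW j k).norm_le_rpow_tsum_mul_rpow_tsum
            (by positivity) (by linarith) (hX.1 j) (hY.1 k)) (by positivity)
      _ = S j ^ (1 / (1 - p)) * T k ^ (1 / (1 - p)) := by
          rw [Real.mul_rpow (by positivity) (by positivity), ← Real.rpow_mul (hS j),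
            ← Real.rpow_mul (hT k), hexp]
  have hprod : Summable fun jk : ℕ × ℕ => S jk.1 ^ (1 / (1 - p)) * T jk.2 ^ (1 / (1 - p)) :=
    hX.2.mul_of_nonneg hY.2 (fun j => by positivity) (fun k => by positivity)
  have hsum : Summable fun jk : ℕ × ℕ => ‖W jk.1 jk.2‖ ^ (2 * p / (1 - p)) :=
    hprod.of_nonneg_of_le (fun _ => by positivity) fun jk => hentry jk.1 jk.2
  refine ⟨hsum, ?_⟩
  calc (∑' jk : ℕ × ℕ, ‖W jk.1 jk.2‖ ^ (2 * p / (1 - p))) ^ ((1 - p) / (2 * p))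
      ≤ (∑' jk : ℕ × ℕ, S jk.1 ^ (1 / (1 - p)) * T jk.2 ^ (1 / (1 - p))) ^
          ((1 - p) / (2 * p)) :=
        Real.rpow_le_rpow (tsum_nonneg fun _ => by positivity)
          (hsum.tsum_le_tsum (fun jk => hentry jk.1 jk.2) hprod) (by positivity)
    _ = xiNorm p X * xiNorm p Y := by
        rw [tsum_prod_mul_eq_mul_tsum (f := fun j => S j ^ (1 / (1 - p)))
            (g := fun k => T k ^ (1 / (1 - p))) hprod,
          Real.mul_rpow (tsum_nonneg fun _ => by positivity) (tsum_nonneg fun _ => by positivity)]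
        rfl

lemma hasXiNorm_single_and_xiNorm_single (hp0 : 0 < p) {u : ℕ → ℂ}
    (hu : Summable fun j => ‖u j‖ ^ (2 * p / (1 - p))) :
    HasXiNorm p (fun j => (Pi.single 0 (u j) : ℕ → ℂ)) ∧
      xiNorm p (fun j => (Pi.single 0 (u j) : ℕ → ℂ)) =
        (∑' j, ‖u j‖ ^ (2 * p / (1 - p))) ^ ((1 - p) / (2 * p)) := by
  have hrow : ∀ j, HasSum (fun l => ‖(Pi.single 0 (u j) : ℕ → ℂ) l‖ ^ (2 * p)) (‖u j‖ ^ (2 * p)) :=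
    fun j => hasSum_norm_rpow_single (by positivity) 0 (u j)
  have hrow_pow : ∀ j, (∑' l, ‖(Pi.single 0 (u j) : ℕ → ℂ) l‖ ^ (2 * p)) ^ (1 / (1 - p)) =
      ‖u j‖ ^ (2 * p / (1 - p)) := fun j => by
    rw [(hrow j).tsum_eq, ← Real.rpow_mul (norm_nonneg _), mul_one_div]
  exact ⟨⟨fun j => (hrow j).summable, by simpa only [hrow_pow] using hu⟩,
    by simp only [xiNorm, hrow_pow]⟩

lemma mem_wReprVals_rankOne (hp0 : 0 < p) {u v : ℕ → ℂ}
    (hu : Summable fun j => ‖u j‖ ^ (2 * p / (1 - p)))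
    (hv : Summable fun k => ‖v k‖ ^ (2 * p / (1 - p))) :
    (∑' j, ‖u j‖ ^ (2 * p / (1 - p))) ^ ((1 - p) / (2 * p)) *
        (∑' k, ‖v k‖ ^ (2 * p / (1 - p))) ^ ((1 - p) / (2 * p)) ∈
      wReprVals p fun j k => u j * v k := by
  obtain ⟨hXu, hXu_norm⟩ := hasXiNorm_single_and_xiNorm_single hp0 hu
  obtain ⟨hXv, hXv_norm⟩ := hasXiNorm_single_and_xiNorm_single hp0 hv
  refine ⟨_, _, hXu, hXv, fun j k => ?_, by rw [hXu_norm, hXv_norm]⟩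
  convert hasSum_pi_single 0 (u j * v k) using 1
  rw [Pi.single_mul]
  rfl

lemma isLeast_wReprVals_rankOne (hp0 : 0 < p) (hp1 : p < 1) {u v : ℕ → ℂ}
    (h : Summable fun jk : ℕ × ℕ => ‖u jk.1 * v jk.2‖ ^ (2 * p / (1 - p))) :
    IsLeast (wReprVals p fun j k => u j * v k)
      ((∑' jk : ℕ × ℕ, ‖u jk.1 * v jk.2‖ ^ (2 * p / (1 - p))) ^ ((1 - p) / (2 * p))) := by
  refine ⟨?_, fun c hc => (summable_and_rpow_tsum_le_of_mem_wReprVals hp0 hp1 hc).2⟩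
  have hp : 0 < 1 - p := by linarith
  obtain ⟨u', v', hu', hv', huv⟩ := exists_summable_rankOne_eq (by positivity) h
  simp only [← huv] at h ⊢
  rw [rpow_tsum_norm_mul_rpow h]
  exact mem_wReprVals_rankOne hp0 hu' hv'

end WNorm

/-- Theorem 6.8: for `0 < p < 1`, a rank-one matrix `W = {u_j v_k}` belongs to `𝒲_p` iff
`∑_{j,k} |w_{jk}|^{2p/(1-p)} < ∞`, in which case
`‖W‖_{𝒲_p} = (∑_{j,k} |w_{jk}|^{2p/(1-p)})^{(1-p)/(2p)} = ‖u‖_{ℓ^{2p♯}} ‖v‖_{ℓ^{2p♯}}`. -/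
theorem stmt16 (p : ℝ) (hp0 : 0 < p) (hp1 : p < 1) (u v : ℕ → ℂ) :
    ((wReprVals p fun j k => u j * v k).Nonempty ↔
      Summable fun jk : ℕ × ℕ => ‖u jk.1 * v jk.2‖ ^ (2 * p / (1 - p))) ∧
    ((Summable fun jk : ℕ × ℕ => ‖u jk.1 * v jk.2‖ ^ (2 * p / (1 - p))) →
      sInf (wReprVals p fun j k => u j * v k) =
          (∑' jk : ℕ × ℕ, ‖u jk.1 * v jk.2‖ ^ (2 * p / (1 - p))) ^
            ((1 - p) / (2 * p)) ∧
        sInf (wReprVals p fun j k => u j * v k) =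
          (∑' j, ‖u j‖ ^ (2 * p / (1 - p))) ^ ((1 - p) / (2 * p)) *
            (∑' k, ‖v k‖ ^ (2 * p / (1 - p))) ^ ((1 - p) / (2 * p))) := by
  refine ⟨⟨fun ⟨_, hc⟩ => (summable_and_rpow_tsum_le_of_mem_wReprVals hp0 hp1 hc).1,
    fun h => ⟨_, (isLeast_wReprVals_rankOne hp0 hp1 h).1⟩⟩, fun h => ?_⟩
  have hInf := (isLeast_wReprVals_rankOne hp0 hp1 h).csInf_eq
  exact ⟨hInf, hInf.trans (rpow_tsum_norm_mul_rpow h)⟩
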